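/- Let R be a commutative ring and q ∈ R. Then for all m, n ∈ ℕ: q^{n(n−1)/2} (1−q)^n (n)_q! (m choose n)_q = Σ_{k=0}^{n} (−1)^{n−k} q^{k(k−1)/2} (n choose k)_q q^{m(n−k)}. -/
import Mathlib

def qInt {R : Type*} [CommRing R] (q : R) (m : ℕ) : R := ∑ i ∈ Finset.range m, q ^ i

def qFact {R : Type*} [CommRing R] (q : R) : ℕ → R
  | 0 => 1
  | n + 1 => qFact q n * qInt q (n + 1)

def qChoose {R : Type*} [CommRing R] (q : R) : ℕ → ℕ → R
  | _, 0 => 1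
  | 0, _ + 1 => 0
  | n + 1, k + 1 => qChoose q n k + q ^ (k + 1) * qChoose q n (k + 1)

section Aux
variable {R : Type*} [CommRing R] (q : R)

lemma tri_succ (k : ℕ) : (k+1) * ((k+1) - 1) / 2 = k * (k-1) / 2 + k := by
  rw [← Nat.choose_two_right, ← Nat.choose_two_right]
  rw [Nat.choose_succ_succ, Nat.choose_one_right, Nat.add_comm]

lemma qChoose_zero_right (n : ℕ) : qChoose q n 0 = 1 := by cases n <;> rfl

lemma qChoose_eq_zero : ∀ {n k : ℕ}, n < k → qChoose q n k = 0 := by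
  intro n
  induction n with
  | zero => intro k hk; match k, hk with | k+1, _ => rfl
  | succ n ih =>
    intro k hk
    match k, hk with
    | k+1, hk =>
      show qChoose q n k + q ^ (k+1) * qChoose q n (k+1) = 0
      rw [ih (by omega), ih (by omega)]
      ring

lemma one_sub_mul_qInt (n : ℕ) : (1 - q) * qInt q n = 1 - q ^ n := by
  have h := geom_sum_mul q n
  unfold qInt
  linear_combination -h

lemma qInt_succ (n : ℕ) : qInt q (n+1) = qInt q n + q ^ n :=
  Finset.sum_range_succ _ _

lemma qInt_succ' (n : ℕ) : qInt q (n+1) = 1 + q * qInt q n := by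
  unfold qInt
  rw [geom_sum_succ]
  ring

lemma qChoose_one (n : ℕ) : qChoose q n 1 = qInt q n := by
  induction n with
  | zero => simp [qChoose, qInt]
  | succ n ih =>
    show qChoose q n 0 + q ^ 1 * qChoose q n 1 = _
    rw [ih, qChoose_zero_right, qInt_succ']
    ring

lemma qChoose_pascal' : ∀ (n k : ℕ),
    qChoose q (n+1) (k+1) = q ^ (n - k) * qChoose q n k + qChoose q n (k+1) := by
  intro n
  induction n with
  | zero =>
    intro k
    match k with
    | 0 => show qChoose q 0 0 + q^1 * qChoose q 0 1 = _; simp [qChoose]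
    | k+1 =>
      show qChoose q 0 (k+1) + q^(k+2) * qChoose q 0 (k+2) = _
      simp [qChoose]
  | succ n ih =>
    intro k
    match k with
    | 0 =>
      show qChoose q (n+1) 0 + q^1 * qChoose q (n+1) 1
          = q^(n+1) * qChoose q (n+1) 0 + qChoose q (n+1) 1
      rw [qChoose_one, qChoose_zero_right]
      have h1 := qInt_succ q (n+1)
      have h2 := qInt_succ' q (n+1)
      linear_combination h1 - h2
    | j+1 =>
      have d1 : qChoose q (n+2) (j+2)
          = qChoose q (n+1) (j+1) + q^(j+2) * qChoose q (n+1) (j+2) := rfl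
      have d2 : qChoose q (n+1) (j+1)
          = qChoose q n j + q^(j+1) * qChoose q n (j+1) := rfl
      have d3 : qChoose q (n+1) (j+2)
          = qChoose q n (j+1) + q^(j+2) * qChoose q n (j+2) := rfl
      have h1 := ih j
      have h2 := ih (j+1)
      rcases lt_trichotomy j n with h | h | h
      · obtain ⟨a, rfl⟩ : ∃ a, n = j + 1 + a := ⟨n - (j+1), by omega⟩
        have e1 : j + 1 + a - (j + 1) = a := by omega
        have e2 : j + 1 + a - j = a + 1 := by omega
        have e3 : j + 1 + a + 1 - (j + 1) = a + 1 := by omega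
        rw [e1] at h2
        rw [e2] at h1
        rw [e3]
        linear_combination d1 + h1 + q^(j+2) * h2 - q^(a+1) * d2 - d3
      · subst h
        have z1 : qChoose q j (j+1) = 0 := qChoose_eq_zero q (by omega)
        have z2 : qChoose q j (j+2) = 0 := qChoose_eq_zero q (by omega)
        have e : j + 1 - (j + 1) = 0 := by omega
        rw [e, d1, d2, d3, z1, z2]
        ring
      · have z0 : qChoose q n j = 0 := qChoose_eq_zero q h
        have z1 : qChoose q n (j+1) = 0 := qChoose_eq_zero q (by omega)
        have z2 : qChoose q n (j+2) = 0 := qChoose_eq_zero q (by omega)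
        rw [d1, d2, d3, z0, z1, z2]
        ring

lemma gauss (q x : R) (n : ℕ) :
    ∏ j ∈ Finset.range n, (q ^ j - x) =
      ∑ k ∈ Finset.range (n+1),
        (-1:R) ^ (n-k) * q ^ (k*(k-1)/2) * qChoose q n k * x ^ (n-k) := by
  induction n with
  | zero => simp [qChoose]
  | succ n ih =>
    rw [Finset.prod_range_succ, ih,
      Finset.sum_range_succ'
        (fun k => (-1:R) ^ (n+1-k) * q ^ (k*(k-1)/2) * qChoose q (n+1) k * x ^ (n+1-k)) (n+1)]
    have key : ∀ k ∈ Finset.range (n+1),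
        (-1:R) ^ (n+1-(k+1)) * q ^ ((k+1)*((k+1)-1)/2) * qChoose q (n+1) (k+1) * x ^ (n+1-(k+1))
          = q ^ n * ((-1:R) ^ (n-k) * q ^ (k*(k-1)/2) * qChoose q n k * x ^ (n-k))
            + (-1:R) ^ (n+1-(k+1)) * q ^ ((k+1)*((k+1)-1)/2) * qChoose q n (k+1)
              * x ^ (n+1-(k+1)) := by
      intro k hk
      have hk' : k ≤ n := Nat.lt_succ_iff.mp (Finset.mem_range.mp hk)
      obtain ⟨a, rfl⟩ : ∃ a, n = k + a := ⟨n - k, by omega⟩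
      have e0 : k + a - k = a := by omega
      have e1 : k + a + 1 - (k + 1) = a := by omega
      rw [qChoose_pascal', tri_succ, e0, e1]
      ring
    rw [Finset.sum_congr rfl key, Finset.sum_add_distrib, add_assoc]
    have hF0 : (-1:R) ^ (n+1-0) * q ^ (0*(0-1)/2) * qChoose q (n+1) 0 * x ^ (n+1-0)
        = (-1:R) ^ (n+1-0) * q ^ (0*(0-1)/2) * qChoose q n 0 * x ^ (n+1-0) := by
      rw [qChoose_zero_right, qChoose_zero_right]
    rw [hF0,
      ← Finset.sum_range_succ'
        (fun k => (-1:R) ^ (n+1-k) * q ^ (k*(k-1)/2) * qChoose q n k * x ^ (n+1-k)) (n+1),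
      Finset.sum_range_succ
        (fun k => (-1:R) ^ (n+1-k) * q ^ (k*(k-1)/2) * qChoose q n k * x ^ (n+1-k)) (n+1),
      qChoose_eq_zero q (show n < n + 1 by omega)]
    have key2 : ∀ k ∈ Finset.range (n+1),
        (-1:R) ^ (n+1-k) * q ^ (k*(k-1)/2) * qChoose q n k * x ^ (n+1-k)
          = (-x) * ((-1:R) ^ (n-k) * q ^ (k*(k-1)/2) * qChoose q n k * x ^ (n-k)) := by
      intro k hk
      have hk' : k ≤ n := Nat.lt_succ_iff.mp (Finset.mem_range.mp hk)
      have e : n + 1 - k = (n - k) + 1 := by omega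
      rw [e, pow_succ, pow_succ]
      ring
    rw [Finset.sum_congr rfl key2, ← Finset.mul_sum, ← Finset.mul_sum]
    ring

lemma lemA (q : R) (m n : ℕ) :
    q ^ (n * (n-1) / 2) * (1 - q) ^ n * qFact q n * qChoose q m n
      = ∏ j ∈ Finset.range n, (q ^ j - q ^ m) := by
  induction m generalizing n with
  | zero =>
    match n with
    | 0 => simp [qFact, qChoose]
    | n+1 =>
      rw [qChoose_eq_zero q (Nat.succ_pos n),
        Finset.prod_eq_zero (Finset.mem_range.mpr (Nat.succ_pos n)) (by simp)]
      ring
  | succ m ih =>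
    match n with
    | 0 => simp [qFact, qChoose]
    | k+1 =>
      have d : qChoose q (m+1) (k+1) = qChoose q m k + q ^ (k+1) * qChoose q m (k+1) := rfl
      have df : qFact q (k+1) = qFact q k * qInt q (k+1) := rfl
      have A := ih k
      have B := ih (k+1)
      rw [tri_succ, df, Finset.prod_range_succ] at B
      have G := one_sub_mul_qInt q (k+1)
      have P2 : ∏ j ∈ Finset.range k, (q ^ (j+1) - q ^ (m+1))
          = q ^ k * ∏ j ∈ Finset.range k, (q ^ j - q ^ m) := by
        rw [Finset.prod_congr rfl (fun j _ => show q ^ (j+1) - q ^ (m+1) = q * (q ^ j - q ^ m) by ring),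
          Finset.prod_mul_distrib, Finset.prod_const, Finset.card_range]
      rw [tri_succ, df, d, Finset.prod_range_succ', P2]
      linear_combination (q ^ k * (1-q) * qInt q (k+1)) * A + q ^ (k+1) * B
        + (q ^ k * ∏ j ∈ Finset.range k, (q ^ j - q ^ m)) * G

end Aux

/-- The exchange lemma: for all `m, n ∈ ℕ`,
`q^{n(n−1)/2} (1−q)^n (n)_q! (m choose n)_q
  = Σ_{k=0}^{n} (−1)^{n−k} q^{k(k−1)/2} (n choose k)_q q^{m(n−k)}`. -/
theorem statement16 {R : Type*} [CommRing R] (q : R) (m n : ℕ) :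
    q ^ (n * (n - 1) / 2) * (1 - q) ^ n * qFact q n * qChoose q m n =
      ∑ k ∈ Finset.range (n + 1),
        (-1 : R) ^ (n - k) * q ^ (k * (k - 1) / 2) * qChoose q n k * q ^ (m * (n - k)) := by
  rw [lemA, gauss q (q ^ m) n]
  exact Finset.sum_congr rfl fun k _ => by rw [← pow_mul]
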